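/- For every B(⟨r⟩,k) formula φ: φ is satisfiable (there exist M = (W,R) and s ∈ W with M, ∅, s ⊨ φ in the memory semantics) if and only if Tr_∅(φ) is satisfiable in H(↓) (there exist M = (W,R), an assignment g : NOM → W and w ∈ W with M, g, w ⊨ Tr_∅(φ)). -/
import Mathlib


/-- Formulas of the memory logic B(⟨r⟩,k):  F ::= k | ¬F | F ∧ F | ◇F. -/
inductive MForm : Type
  | known : MForm
  | neg : MForm → MForm
  | conj : MForm → MForm → MForm
  | dia : MForm → MForm
deriving DecidableEq

namespace MForm

def disj (φ ψ : MForm) : MForm := neg (conj (neg φ) (neg ψ))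
def impl (φ ψ : MForm) : MForm := neg (conj φ (neg ψ))
def box (φ : MForm) : MForm := neg (dia (neg φ))
def bot : MForm := conj known (neg known)
def top : MForm := disj known (neg known)

end MForm

/-- Satisfaction for B(⟨r⟩,k) on a Kripke frame (W, R), at state `w`, with memory `S`.
`◇` is the remember-and-move operator: the current state is added to the memory. -/
def MSat {W : Type*} (R : W → W → Prop) : Set W → W → MForm → Prop
  | S, w, .known => w ∈ S
  | S, w, .neg φ => ¬ MSat R S w φ
  | S, w, .conj φ ψ => MSat R S w φ ∧ MSat R S w ψ
  | S, w, .dia φ => ∃ t, R w t ∧ MSat R (S ∪ {w}) t φ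

/-- A formula is satisfiable iff it holds at some state of some frame with empty initial memory. -/
def MSatisfiable (φ : MForm) : Prop :=
  ∃ (W : Type) (R : W → W → Prop) (s : W), MSat R ∅ s φ

namespace MForm

/-- The macro s ≡ ◇□⊥ : "the current state sees a dead end". -/
def sees : MForm := dia (box bot)

/-- a-or-b ≡ k ∧ ◇(k ∧ ¬s). -/
def aorb : MForm := conj known (dia (conj known (neg sees)))

/-- c ≡ k ∧ □(k → s). -/
def cmac : MForm := conj known (box (impl known sees))

/-- The formula `Inf`, the conjunction of the seven conjuncts (1)–(7). -/
def infF : MForm :=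
  conj sees <|                                                              -- (1) s
  conj (box (neg sees)) <|                                                  -- (2) □¬s
  conj (box (box (impl known sees))) <|                                     -- (3) □□(k → s)
  conj (dia (dia known)) <|                                                 -- (4) ◇◇k
  conj (box (impl (dia top) (dia (conj (neg known) (neg sees))))) <|        -- (5)
  conj (box (box (impl (neg sees)
        (dia (conj known (conj sees (dia (conj known (box (impl known sees)))))))))) <|  -- (6)
  box (box (impl (neg sees) (box (impl (neg sees)
        (dia (conj known (conj sees (box (impl aorb (dia cmac))))))))))     -- (7)

end MForm

/-- A state `x` "sees a dead end": some successor of `x` has no successor. -/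
def seesDeadEnd {W : Type*} (R : W → W → Prop) (x : W) : Prop :=
  ∃ y, R x y ∧ ∀ z, ¬ R y z

/-- Formulas of the hybrid logic H(↓), over a countably infinite set of nominals
(here ℕ), with no propositional symbols beyond nominals and a single relation:
ψ ::= i | ¬ψ | ψ ∧ ψ | ◇ψ | ↓i.ψ. -/
inductive HForm : Type
  | nom : ℕ → HForm
  | neg : HForm → HForm
  | conj : HForm → HForm → HForm
  | dia : HForm → HForm
  | bind : ℕ → HForm → HForm
deriving DecidableEq

/-- Satisfaction for H(↓) on a Kripke frame (W, R), with assignment `g` of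
nominals to states, at state `w`. -/
def HSat {W : Type*} (R : W → W → Prop) : (ℕ → W) → W → HForm → Prop
  | g, w, .nom i => g i = w
  | g, w, .neg ψ => ¬ HSat R g w ψ
  | g, w, .conj ψ χ => HSat R g w ψ ∧ HSat R g w χ
  | g, w, .dia ψ => ∃ t, R w t ∧ HSat R g t ψ
  | g, w, .bind i ψ => HSat R (Function.update g i w) w ψ

namespace HForm

/-- A hybrid contradiction ⊥. -/
def botH : HForm := conj (nom 0) (neg (nom 0))

/-- Finite disjunction of hybrid formulas (the empty disjunction being ⊥). -/
def bigDisjH : List HForm → HForm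
  | [] => botH
  | ψ :: l => neg (conj (neg ψ) (neg (bigDisjH l)))

end HForm

/-- A fixed choice of a fresh nominal not in the finite set `N`. -/
def freshNom (N : Finset ℕ) : ℕ := (N.sup id) + 1

theorem freshNom_not_mem (N : Finset ℕ) : freshNom N ∉ N := fun h =>
  Nat.not_succ_le_self (N.sup id) (Finset.le_sup (f := id) h)

/-- The translation Tr_N from B(⟨r⟩,k) formulas to H(↓) formulas:
Tr_N(k) = ⋁_{i∈N} i,  Tr commutes with ¬ and ∧,  and
Tr_N(◇φ) = ↓i.◇Tr_{N∪{i}}(φ) for a fixed fresh nominal i ∉ N. -/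
def Tr (N : Finset ℕ) : MForm → HForm
  | .known => HForm.bigDisjH ((N.sort (· ≤ ·)).map HForm.nom)
  | .neg φ => .neg (Tr N φ)
  | .conj φ ψ => .conj (Tr N φ) (Tr N ψ)
  | .dia φ => .bind (freshNom N) (.dia (Tr (insert (freshNom N) N) φ))

lemma hsat_bigDisjH {W : Type*} (R : W → W → Prop) (g : ℕ → W) (w : W) :
    ∀ l : List HForm, HSat R g w (HForm.bigDisjH l) ↔ ∃ ψ ∈ l, HSat R g w ψ := by
  intro l
  induction l with
  | nil =>
    simp only [HForm.bigDisjH, HForm.botH, HSat]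
    simp
  | cons ψ l ih =>
    simp only [HForm.bigDisjH, HSat, List.mem_cons]
    constructor
    · intro h
      by_cases hψ : HSat R g w ψ
      · exact ⟨ψ, Or.inl rfl, hψ⟩
      · rcases ih.mp (by tauto) with ⟨χ, hχ, h2⟩
        exact ⟨χ, Or.inr hχ, h2⟩
    · rintro ⟨χ, hχ | hχ, h2⟩
      · subst hχ; tauto
      · intro h; exact h.2 (ih.mpr ⟨χ, hχ, h2⟩)

lemma key_tr {W : Type} (R : W → W → Prop) :
    ∀ (φ : MForm) (N : Finset ℕ) (g : ℕ → W) (S : Set W) (w : W),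
      (∀ x, x ∈ S ↔ ∃ j ∈ N, g j = x) →
      (MSat R S w φ ↔ HSat R g w (Tr N φ)) := by
  intro φ
  induction φ with
  | known =>
    intro N g S w hS
    simp only [MSat, Tr, hsat_bigDisjH, List.mem_map, hS]
    constructor
    · rintro ⟨j, hj, rfl⟩
      exact ⟨HForm.nom j, ⟨j, (Finset.mem_sort _).mpr hj, rfl⟩, rfl⟩
    · rintro ⟨ψ, ⟨j, hj, rfl⟩, h⟩
      exact ⟨j, (Finset.mem_sort _).mp hj, h⟩
  | neg φ ih =>
    intro N g S w hS
    simp only [MSat, Tr, HSat, ih N g S w hS]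
  | conj φ ψ ihφ ihψ =>
    intro N g S w hS
    simp only [MSat, Tr, HSat, ihφ N g S w hS, ihψ N g S w hS]
  | dia φ ih =>
    intro N g S w hS
    simp only [MSat, Tr, HSat]
    have hinv : ∀ x, x ∈ S ∪ {w} ↔
        ∃ j ∈ insert (freshNom N) N, Function.update g (freshNom N) w j = x := by
      intro x
      simp only [Set.mem_union, Set.mem_singleton_iff, Finset.mem_insert, hS]
      constructor
      · rintro (⟨j, hj, rfl⟩ | rfl)
        · refine ⟨j, Or.inr hj, ?_⟩
          rw [Function.update_of_ne]
          rintro rfl; exact freshNom_not_mem N hj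
        · exact ⟨freshNom N, Or.inl rfl, Function.update_self _ _ _⟩
      · rintro ⟨j, hj | hj, rfl⟩
        · subst hj; right; rw [Function.update_self]
        · left
          refine ⟨j, hj, ?_⟩
          rw [Function.update_of_ne]
          rintro rfl; exact freshNom_not_mem N hj
    constructor
    · rintro ⟨t, ht, h⟩
      exact ⟨t, ht, (ih _ _ _ _ hinv).mp h⟩
    · rintro ⟨t, ht, h⟩
      exact ⟨t, ht, (ih _ _ _ _ hinv).mpr h⟩

/-- a B(⟨r⟩,k) formula φ is satisfiable (with empty initial memory)
iff its translation Tr_∅(φ) is satisfiable in H(↓). -/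
theorem msatisfiable_iff_tr_hsatisfiable (φ : MForm) :
    (∃ (W : Type) (R : W → W → Prop) (s : W), MSat R ∅ s φ) ↔
    (∃ (W : Type) (R : W → W → Prop) (g : ℕ → W) (w : W), HSat R g w (Tr ∅ φ)) := by
  have hinv : ∀ (W : Type) (g : ℕ → W) (x : W),
      x ∈ (∅ : Set W) ↔ ∃ j ∈ (∅ : Finset ℕ), g j = x := by simp
  constructor
  · rintro ⟨W, R, s, h⟩
    exact ⟨W, R, fun _ => s, s, (key_tr R φ ∅ _ ∅ s (hinv W _)).mp h⟩
  · rintro ⟨W, R, g, w, h⟩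
    exact ⟨W, R, w, (key_tr R φ ∅ g ∅ w (hinv W g)).mpr h⟩
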